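/- arXiv:0810.2937 — 2 statements merged into one kernel-verified Lean document; each statement's English description precedes it below -/
import Mathlib

section
/- For every n ≥ 1 there exists a pure classical n↦1 strategy (E, D) that maximizes the average success probability among all pure classical n↦1 strategies and in which no decoding function D i is a constant function (i.e., each D i is either the identity or the negation on {0,1}). -/
/-!
For each bit `i` separately, the decoder `D i` only matters through the number of inputs on
which it recovers `x i`. The identity and the negation together succeed on every input exactly
once, so the better of the two succeeds on at least half of the inputs, while a constant decoder
succeeds on exactly half of them, because `x ↦ x i` is balanced. Replacing every decoder by the
better of identity and negation therefore never lowers the success probability, and applying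
this to an optimal encoding gives an optimal strategy without constant decoders.
-/

/-- The average success probability (over the uniform input distribution) of a pure
classical `n ↦ 1` strategy with encoding `E` and decoding functions `D`. -/
noncomputable def avgSuccess (n : ℕ) (E : (Fin n → Bool) → Bool)
    (D : Fin n → Bool → Bool) : ℝ :=
  (1 / ((n : ℝ) * 2 ^ n)) *
    ∑ x : Fin n → Bool, ∑ i : Fin n, (if D i (E x) = x i then (1 : ℝ) else 0)

open Finset

namespace Decoding

lemma eq_id_or_eq_not_or_eq_const (d : Bool → Bool) :
    d = id ∨ d = not ∨ d = (fun _ => true) ∨ d = (fun _ => false) := by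
  revert d; decide

variable {X : Type*} [Fintype X]

def hits (d : Bool → Bool) (e t : X → Bool) : ℕ := #{x | d (e x) = t x}

lemma hits_id_add_hits_not (e t : X → Bool) : hits id e t + hits not e t = Fintype.card X := by
  rw [← card_univ, ← card_filter_add_card_filter_not (s := univ) (fun x => e x = t x)]
  simp only [hits, id]
  congr 3
  ext x
  cases e x <;> cases t x <;> decide

lemma two_mul_hits_const {t : X → Bool} (hbal : #{x | t x = true} = #{x | t x = false})
    (e : X → Bool) (c : Bool) : 2 * hits (fun _ => c) e t = Fintype.card X := by
  have hsplit := card_filter_add_card_filter_not (s := univ) (fun x => t x = true)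
  simp only [Bool.not_eq_true, card_univ] at hsplit
  cases c <;> simp only [hits, eq_comm (a := false), eq_comm (a := true)] <;> omega

def bestDecoder (e t : X → Bool) : Bool → Bool :=
  if hits not e t ≤ hits id e t then id else not

lemma hits_bestDecoder (e t : X → Bool) :
    hits (bestDecoder e t) e t = max (hits id e t) (hits not e t) := by
  unfold bestDecoder
  split_ifs with h
  · exact (max_eq_left h).symm
  · exact (max_eq_right (not_le.mp h).le).symm

lemma hits_le_hits_bestDecoder {t : X → Bool}
    (hbal : #{x | t x = true} = #{x | t x = false}) (d : Bool → Bool) (e : X → Bool) :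
    hits d e t ≤ hits (bestDecoder e t) e t := by
  rw [hits_bestDecoder]
  have hsum := hits_id_add_hits_not e t
  rcases eq_id_or_eq_not_or_eq_const d with rfl | rfl | rfl | rfl
  · exact le_max_left _ _
  · exact le_max_right _ _
  · have := two_mul_hits_const hbal e true
    omega
  · have := two_mul_hits_const hbal e false
    omega

end Decoding

open Decoding

lemma card_coord_true_eq_card_coord_false {n : ℕ} (i : Fin n) :
    #{x : Fin n → Bool | x i = true} = #{x : Fin n → Bool | x i = false} := by
  let flip : (Fin n → Bool) ≃ (Fin n → Bool) :=
    Equiv.piCongrRight fun j => if j = i then Equiv.boolNot else Equiv.refl Bool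
  exact card_equiv flip (by simp [flip])

lemma avgSuccess_eq_sum_hits (n : ℕ) (E : (Fin n → Bool) → Bool)
    (D : Fin n → Bool → Bool) :
    avgSuccess n E D = (1 / ((n : ℝ) * 2 ^ n)) * ∑ i, (hits (D i) E (· i) : ℝ) := by
  rw [avgSuccess, sum_comm]
  simp only [hits, sum_boole]

lemma avgSuccess_le_bestDecoder (n : ℕ) (E : (Fin n → Bool) → Bool)
    (D : Fin n → Bool → Bool) :
    avgSuccess n E D ≤ avgSuccess n E (fun i => bestDecoder E (· i)) := by
  simp only [avgSuccess_eq_sum_hits]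
  gcongr with i
  exact hits_le_hits_bestDecoder (card_coord_true_eq_card_coord_false i) _ _

theorem stmt2_general (n : ℕ) :
    ∃ (E : (Fin n → Bool) → Bool) (D : Fin n → Bool → Bool),
      (∀ (E' : (Fin n → Bool) → Bool) (D' : Fin n → Bool → Bool),
        avgSuccess n E' D' ≤ avgSuccess n E D) ∧
      (∀ i : Fin n, D i = (fun b => b) ∨ D i = (fun b => !b)) := by
  obtain ⟨E, -, hE⟩ := exists_max_image univ
    (fun E => avgSuccess n E (fun i => bestDecoder E (· i))) univ_nonempty
  refine ⟨E, fun i => bestDecoder E (· i), fun E' D' => ?_, fun i => ?_⟩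
  · exact (avgSuccess_le_bestDecoder n E' D').trans (hE E' (mem_univ _))
  · show bestDecoder E (· i) = id ∨ bestDecoder E (· i) = not
    unfold bestDecoder
    split_ifs
    exacts [Or.inl rfl, Or.inr rfl]

/-- There is an optimal pure classical `n ↦ 1` strategy in which no decoding function
is constant: each decoding function is either the identity or the negation on `{0,1}`. -/
theorem stmt2 (n : ℕ) (hn : 1 ≤ n) :
    ∃ (E : (Fin n → Bool) → Bool) (D : Fin n → Bool → Bool),
      (∀ (E' : (Fin n → Bool) → Bool) (D' : Fin n → Bool → Bool),
        avgSuccess n E' D' ≤ avgSuccess n E D) ∧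
      (∀ i : Fin n, D i = (fun b => b) ∨ D i = (fun b => !b)) :=
  stmt2_general n
end

section
/- For every n ≥ 1 there exists a pure classical n↦1 strategy (E, D) that maximizes the average success probability among all pure classical n↦1 strategies and in which no decoding function D i is the negation function b ↦ 1 − b. -/
/-!
Flipping input bit `i` before encoding and negating the output of decoder `i` changes no
success indicator, only the order of summation over inputs, so it preserves the average
success. Starting from any optimal strategy, flip exactly the bits whose decoder is
negation; those decoders become the identity.
-/

theorem xor_involutive_pi {ι : Type*} (s : ι → Bool) :
    Function.Involutive fun (x : ι → Bool) i => xor (x i) (s i) := fun x => by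
  funext i
  simp

theorem avgSuccess_xor_mask (n : ℕ) (E : (Fin n → Bool) → Bool) (D : Fin n → Bool → Bool)
    (s : Fin n → Bool) :
    avgSuccess n (fun x => E fun i => xor (x i) (s i)) (fun i b => xor (D i b) (s i)) =
      avgSuccess n E D := by
  unfold avgSuccess
  congr 1
  rw [← Equiv.sum_comp (xor_involutive_pi s).toPerm]
  refine Fintype.sum_congr _ _ fun x => Fintype.sum_congr _ _ fun i => ?_
  simp only [Function.Involutive.coe_toPerm, xor_involutive_pi s x]
  cases s i <;> simp

theorem exists_forall_avgSuccess_le (n : ℕ) :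
    ∃ (E : (Fin n → Bool) → Bool) (D : Fin n → Bool → Bool),
      ∀ E' D', avgSuccess n E' D' ≤ avgSuccess n E D := by
  obtain ⟨⟨E, D⟩, hmax⟩ := Finite.exists_max fun p : ((Fin n → Bool) → Bool) × _ =>
    avgSuccess n p.1 p.2
  exact ⟨E, D, fun E' D' => hmax (E', D')⟩

theorem xor_decide_eq_not_ne_not (f : Bool → Bool) :
    (fun b => xor (f b) (decide (f = fun b => !b))) ≠ fun b => !b := by
  by_cases hf : f = fun b => !b
  · subst hf
    exact fun h => by simpa using congrFun h true
  · simp [hf]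

theorem stmt3_general (n : ℕ) :
    ∃ (E : (Fin n → Bool) → Bool) (D : Fin n → Bool → Bool),
      (∀ (E' : (Fin n → Bool) → Bool) (D' : Fin n → Bool → Bool),
        avgSuccess n E' D' ≤ avgSuccess n E D) ∧
      (∀ i : Fin n, D i ≠ (fun b => !b)) := by
  obtain ⟨E, D, hmax⟩ := exists_forall_avgSuccess_le n
  let s : Fin n → Bool := fun i => decide (D i = fun b => !b)
  refine ⟨fun x => E fun i => xor (x i) (s i), fun i b => xor (D i b) (s i), ?_, ?_⟩
  · intro E' D'
    rw [avgSuccess_xor_mask]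
    exact hmax E' D'
  · exact fun i => xor_decide_eq_not_ne_not (D i)

/-- There is an optimal pure classical `n ↦ 1` strategy in which no decoding function
is the negation function `b ↦ 1 - b`. -/
theorem stmt3 (n : ℕ) (hn : 1 ≤ n) :
    ∃ (E : (Fin n → Bool) → Bool) (D : Fin n → Bool → Bool),
      (∀ (E' : (Fin n → Bool) → Bool) (D' : Fin n → Bool → Bool),
        avgSuccess n E' D' ≤ avgSuccess n E D) ∧
      (∀ i : Fin n, D i ≠ (fun b => !b)) :=
  stmt3_general n
end
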